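/- arXiv:1405.1594 — 2 statements merged into one kernel-verified Lean document; each statement's English description precedes it below -/
import Mathlib

section
/- In the ADMM-like algorithm, the dual update q₁^{(k+1)} = q₁^{(k)} + u^{(k+1)} − v^{(k+1)}, where v^{(k+1)} minimizes v ↦ λ‖∇₁v‖₀ + (η^{(k)}/2)‖u^{(k+1)} − v + q₁^{(k)}‖₂², satisfies ‖q₁^{(k+1)}‖₂² ≤ 2λn/η^{(k)}, where n is the number of grid points. -/
open Filter Topology

/-- Grouped ℓ⁰ semi-norm: counts the grid points with nonzero d-dimensional group. -/
noncomputable def l0 {n d : ℕ} (w : Fin n → Fin d → ℝ) : ℝ :=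
  Set.ncard {i : Fin n | w i ≠ 0}

lemma l0_nonneg {n d : ℕ} (w : Fin n → Fin d → ℝ) : 0 ≤ l0 w :=
  Nat.cast_nonneg _

lemma l0_le {n d : ℕ} (w : Fin n → Fin d → ℝ) : l0 w ≤ n := by
  unfold l0
  exact_mod_cast (Set.ncard_le_card _).trans_eq (Nat.card_fin n)

lemma sq_norm_sub_le_of_minimizes {E : Type*} [SeminormedAddCommGroup E] {f : E → ℝ}
    {B lam η : ℝ} {a v : E} (hfv : 0 ≤ f v) (hfa : f a ≤ B) (hlam : 0 ≤ lam) (hη : 0 < η)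
    (hv : ∀ x, lam * f v + η / 2 * ‖a - v‖ ^ 2 ≤ lam * f x + η / 2 * ‖a - x‖ ^ 2) :
    ‖a - v‖ ^ 2 ≤ 2 * lam * B / η := by
  -- compare with the candidate `x = a`, where the quadratic term vanishes
  have hcmp := hv a
  rw [sub_self, norm_zero] at hcmp
  rw [le_div_iff₀ hη]
  nlinarith [mul_nonneg hlam hfv, mul_le_mul_of_nonneg_left hfa hlam]

/-- The dual update of the ADMM-like algorithm satisfies ‖q₁^{(k+1)}‖₂² ≤ 2λn/η^{(k)}. -/
theorem stmt8 {N n d : ℕ}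
    (D1 : EuclideanSpace ℝ (Fin N) →ₗ[ℝ] (Fin n → Fin d → ℝ))
    (lam η : ℝ) (hlam : 0 < lam) (hη : 0 < η)
    (u q vnew qnew : EuclideanSpace ℝ (Fin N))
    (hv : ∀ x : EuclideanSpace ℝ (Fin N),
      lam * l0 (D1 vnew) + η / 2 * ‖u - vnew + q‖ ^ 2 ≤
        lam * l0 (D1 x) + η / 2 * ‖u - x + q‖ ^ 2)
    (hq : qnew = q + u - vnew) :
    ‖qnew‖ ^ 2 ≤ 2 * lam * n / η := by
  rw [hq, add_comm q u]
  refine sq_norm_sub_le_of_minimizes (f := fun x => l0 (D1 x)) (l0_nonneg _) (l0_le _)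
    hlam.le hη ?_
  simpa only [add_sub_right_comm] using hv
end

section
/- Let F : ℝ^{dn} → ℝ ∪ {+∞} be bounded on its domain and suppose each u-subproblem of the ADMM-like algorithm has a global minimizer. Then with η^{(k)} = η^{(0)}σ^k (σ > 1), the sequence u^{(k)} converges, ‖u^{(k+1)} − u^{(k)}‖₂ decreasing exponentially, and consequently (u^{(k)}, v^{(k)}, w^{(k)}) converge to a common limit with (q₁^{(k)}, q₂^{(k)}) → (0,0). -/
/-!
Testing the `v`-subproblem against `u (k+1) + q₁ k` gives `η k * ‖q₁ (k+1)‖² ≤ 2λn`, so the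
multipliers decay like `σ ^ (-k/2)`; likewise for `w` and `q₂`. Testing the `u`-subproblem
against `u k` and expanding the squares gives `‖Δ‖² ≤ 2B / η k + ‖Δ‖ * ‖ε k‖` for the step
`Δ = u (k+1) - u k`, where `ε k` is a combination of the last two multipliers. Hence the steps
decay geometrically, `u` is Cauchy, and `v`, `w` follow it because `u - v` and `u - w` are
increments of the vanishing multipliers.
-/

open Filter Topology

lemma EReal.ne_top_of_add_coe_le {x y : EReal} {a b : ℝ} (hy : y ≠ ⊤) (h : x + a ≤ y + b) :
    x ≠ ⊤ := by
  rintro rfl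
  rw [EReal.top_add_coe, top_le_iff] at h
  lift y to ℝ using ⟨hy, fun h' => by simp [h'] at h⟩
  exact EReal.coe_ne_top _ (by exact_mod_cast h)

lemma EReal.le_add_of_add_le_of_mem_Icc {x y : EReal} {a b B : ℝ}
    (hx : x ∈ Set.Icc ((-B : ℝ) : EReal) B) (hy : y ∈ Set.Icc ((-B : ℝ) : EReal) B)
    (h : y + a ≤ x + b) : a ≤ b + 2 * B := by
  rw [Set.mem_Icc] at hx hy
  lift x to ℝ using ⟨ne_top_of_le_ne_top (EReal.coe_ne_top B) hx.2,
    ne_bot_of_le_ne_bot (EReal.coe_ne_bot _) hx.1⟩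
  lift y to ℝ using ⟨ne_top_of_le_ne_top (EReal.coe_ne_top B) hy.2,
    ne_bot_of_le_ne_bot (EReal.coe_ne_bot _) hy.1⟩
  norm_cast at hx hy h
  linarith

section

variable {E : Type*} [NormedAddCommGroup E]

lemma norm_le_sqrt_of_l0_prox {n d : ℕ} (D : E → Fin n → Fin d → ℝ) {lam η : ℝ}
    (hlam : 0 ≤ lam) (hη : 0 < η) {a y q q' : E}
    (hy : ∀ x, lam * l0 (D y) + η / 2 * ‖a - y + q‖ ^ 2 ≤
      lam * l0 (D x) + η / 2 * ‖a - x + q‖ ^ 2)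
    (hq' : q' = q + a - y) : ‖q'‖ ≤ √(2 * (lam * n) / η) := by
  have h := hy (a + q)
  rw [show a - (a + q) + q = 0 by abel, show a - y + q = q' by rw [hq']; abel, norm_zero] at h
  have := mul_nonneg hlam (l0_nonneg (D y))
  have := mul_le_mul_of_nonneg_left (l0_le (D (a + q))) hlam
  apply Real.le_sqrt_of_sq_le
  rw [le_div_iff₀ hη]
  nlinarith

lemma norm_sub_add_le_of_dual_update {u v q q' : E} (hq' : q' = q + u - v) :
    ‖u - v + q'‖ ≤ 2 * ‖q'‖ + ‖q‖ := by
  rw [show u - v + q' = q' + q' - q by rw [hq']; abel]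
  linarith [norm_sub_le (q' + q') q, norm_add_le q' q']

end

lemma le_sqrt_add_of_sq_le {t c s : ℝ} (hs : 0 ≤ s) (h : t ^ 2 ≤ c + s * t) : t ≤ √c + s := by
  have hc : c ≤ √c ^ 2 := by
    rcases le_total 0 c with hc | hc
    · rw [Real.sq_sqrt hc]
    · exact hc.trans (sq_nonneg _)
  have := Real.sqrt_nonneg c
  nlinarith

section

variable {E : Type*} [NormedAddCommGroup E] [InnerProductSpace ℝ E] {η c : ℝ}

lemma norm_le_sqrt_add_of_prox_le (hη : 0 < η) {d a b : E}
    (h : η / 2 * (‖d + a‖ ^ 2 + ‖d + b‖ ^ 2) ≤ η / 2 * (‖a‖ ^ 2 + ‖b‖ ^ 2) + c) :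
    ‖d‖ ≤ √(c / η) + ‖a + b‖ := by
  rw [norm_add_sq_real, norm_add_sq_real] at h
  have hcs := real_inner_le_norm d (-(a + b))
  rw [inner_neg_right, inner_add_right, norm_neg] at hcs
  apply le_sqrt_add_of_sq_le (norm_nonneg _)
  rw [div_add' _ _ _ hη.ne', le_div_iff₀ hη]
  nlinarith

lemma norm_sub_le_of_prox_step (hη : 0 < η) {x y v w p q : E}
    (h : η / 2 * (‖y - v + p‖ ^ 2 + ‖y - w + q‖ ^ 2) ≤
      η / 2 * (‖x - v + p‖ ^ 2 + ‖x - w + q‖ ^ 2) + c) :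
    ‖y - x‖ ≤ √(c / η) + ‖(x - v + p) + (x - w + q)‖ := by
  apply norm_le_sqrt_add_of_prox_le hη
  convert h using 5 <;> abel

end

lemma exists_le_geometric_of_le_geometric_add {a : ℕ → ℝ} {K r : ℝ} (m : ℕ) (hr : 0 < r)
    (h : ∀ k, a (k + m) ≤ K * r ^ k) : ∃ C, 0 < C ∧ ∀ k, a k ≤ C * r ^ k := by
  set S := ∑ i ∈ Finset.range m, |a i| / r ^ i
  have hS0 : 0 ≤ S := Finset.sum_nonneg fun i _ => by positivity
  refine ⟨|K| / r ^ m + S + 1, by positivity, fun k => ?_⟩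
  rcases lt_or_ge k m with hk | hk
  · have hS : |a k| / r ^ k ≤ S :=
      Finset.single_le_sum (f := fun i => |a i| / r ^ i) (fun i _ => by positivity)
        (Finset.mem_range.mpr hk)
    calc a k ≤ |a k| / r ^ k * r ^ k := by
          rw [div_mul_cancel₀ _ (by positivity)]; exact le_abs_self _
      _ ≤ (|K| / r ^ m + S + 1) * r ^ k := by
          gcongr; linarith [(by positivity : 0 ≤ |K| / r ^ m)]
  · obtain ⟨j, rfl⟩ := Nat.exists_eq_add_of_le' hk
    calc a (j + m) ≤ K * r ^ j := h j
      _ ≤ |K| * r ^ j := by gcongr; exact le_abs_self K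
      _ = |K| / r ^ m * r ^ (j + m) := by field_simp; ring
      _ ≤ (|K| / r ^ m + S + 1) * r ^ (j + m) := by gcongr; linarith

lemma tendsto_of_dual_update {E : Type*} [AddCommGroup E] [TopologicalSpace E]
    [IsTopologicalAddGroup E] {u v q : ℕ → E} {x : E} (hu : Tendsto u atTop (𝓝 x))
    (hq : Tendsto q atTop (𝓝 0)) (hupd : ∀ k, q (k + 1) = q k + u (k + 1) - v (k + 1)) :
    Tendsto v atTop (𝓝 x) := by
  rw [← tendsto_add_atTop_iff_nat 1]
  have hv : (fun k => v (k + 1)) = fun k => u (k + 1) + q k - q (k + 1) := by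
    funext k; rw [hupd]; abel
  simpa [hv] using
    (((tendsto_add_atTop_iff_nat 1).mpr hu).add hq).sub ((tendsto_add_atTop_iff_nat 1).mpr hq)

lemma tendsto_zero_of_norm_succ_le_geometric {E : Type*} [SeminormedAddCommGroup E]
    {q : ℕ → E} {M r : ℝ} (hr0 : 0 ≤ r) (hr1 : r < 1) (h : ∀ k, ‖q (k + 1)‖ ≤ M * r ^ k) :
    Tendsto q atTop (𝓝 0) := by
  refine (tendsto_add_atTop_iff_nat 1).mp (squeeze_zero_norm h ?_)
  simpa using (tendsto_pow_atTop_nhds_zero_of_lt_one hr0 hr1).const_mul M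

lemma sqrt_div_mul_pow (c η₀ σ : ℝ) (hσ : 0 ≤ σ) (k : ℕ) :
    √(c / (η₀ * σ ^ k)) = √(c / η₀) * (√σ)⁻¹ ^ k := by
  have : c / (η₀ * σ ^ k) = c / η₀ * ((√σ)⁻¹ ^ k) ^ 2 := by
    rw [← pow_mul, mul_comm k, pow_mul, inv_pow, Real.sq_sqrt hσ, inv_pow, div_mul_eq_div_div,
      div_eq_mul_inv _ (σ ^ k)]
  rw [this, Real.sqrt_mul' _ (by positivity), Real.sqrt_sq (by positivity)]

/-- Convergence of the ADMM-like algorithm for F bounded on its domain,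
assuming the u-subproblems have global minimizers (Theorem 4.2). -/
theorem stmt13 {N n d : ℕ}
    (F : EuclideanSpace ℝ (Fin N) → EReal)
    (hproper : ∃ x, F x ≠ ⊤)
    (hbound : ∃ B : ℝ, ∀ x, F x ≠ ⊤ → (((-B : ℝ) : EReal) ≤ F x ∧ F x ≤ ((B : ℝ) : EReal)))
    (D1 D2 : EuclideanSpace ℝ (Fin N) →ₗ[ℝ] (Fin n → Fin d → ℝ))
    (lam η₀ σ : ℝ) (hlam : 0 < lam) (hη₀ : 0 < η₀) (hσ : 1 < σ)
    (η : ℕ → ℝ) (hη : ∀ k, η k = η₀ * σ ^ k)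
    (u v w q1 q2 : ℕ → EuclideanSpace ℝ (Fin N))
    (hu : ∀ k, ∀ x : EuclideanSpace ℝ (Fin N),
      F (u (k + 1)) + ((η k / 2 * (‖u (k + 1) - v k + q1 k‖ ^ 2
          + ‖u (k + 1) - w k + q2 k‖ ^ 2) : ℝ) : EReal) ≤
        F x + ((η k / 2 * (‖x - v k + q1 k‖ ^ 2 + ‖x - w k + q2 k‖ ^ 2) : ℝ) : EReal))
    (hv : ∀ k, ∀ x : EuclideanSpace ℝ (Fin N),
      lam * l0 (D1 (v (k + 1))) + η k / 2 * ‖u (k + 1) - v (k + 1) + q1 k‖ ^ 2 ≤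
        lam * l0 (D1 x) + η k / 2 * ‖u (k + 1) - x + q1 k‖ ^ 2)
    (hw : ∀ k, ∀ x : EuclideanSpace ℝ (Fin N),
      lam * l0 (D2 (w (k + 1))) + η k / 2 * ‖u (k + 1) - w (k + 1) + q2 k‖ ^ 2 ≤
        lam * l0 (D2 x) + η k / 2 * ‖u (k + 1) - x + q2 k‖ ^ 2)
    (hq1 : ∀ k, q1 (k + 1) = q1 k + u (k + 1) - v (k + 1))
    (hq2 : ∀ k, q2 (k + 1) = q2 k + u (k + 1) - w (k + 1)) :
    (∃ C r : ℝ, 0 < C ∧ 0 < r ∧ r < 1 ∧ ∀ k, ‖u (k + 1) - u k‖ ≤ C * r ^ k) ∧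
    ∃ uh : EuclideanSpace ℝ (Fin N),
      Tendsto u atTop (nhds uh) ∧ Tendsto v atTop (nhds uh) ∧ Tendsto w atTop (nhds uh) ∧
        Tendsto q1 atTop (nhds 0) ∧ Tendsto q2 atTop (nhds 0) := by
  obtain ⟨x₀, hx₀⟩ := hproper
  obtain ⟨B, hB⟩ := hbound
  have hηpos : ∀ k, 0 < η k := fun k => hη k ▸ by positivity
  set r := (√σ)⁻¹
  have hr0 : 0 < r := by positivity
  have hr1 : r < 1 := inv_lt_one_of_one_lt₀ (Real.lt_sqrt zero_le_one |>.mpr (by simpa using hσ))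
  have hrate : ∀ c k, √(c / η k) = √(c / η₀) * r ^ k := fun c k =>
    hη k ▸ sqrt_div_mul_pow c η₀ σ (by linarith) k
  set M := √(2 * (lam * n) / η₀)
  have hq1b : ∀ k, ‖q1 (k + 1)‖ ≤ M * r ^ k := fun k =>
    (norm_le_sqrt_of_l0_prox D1 hlam.le (hηpos k) (hv k) (hq1 k)).trans_eq (hrate _ k)
  have hq2b : ∀ k, ‖q2 (k + 1)‖ ≤ M * r ^ k := fun k =>
    (norm_le_sqrt_of_l0_prox D2 hlam.le (hηpos k) (hw k) (hq2 k)).trans_eq (hrate _ k)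
  have hFu : ∀ k, F (u (k + 1)) ≠ ⊤ := fun k => EReal.ne_top_of_add_coe_le hx₀ (hu k x₀)
  -- `F (u 0)` may be `⊤` and `q1 0`, `q2 0` are unconstrained, so the step bound starts at `k = 2`.
  have hstep : ∀ k, ‖u (k + 2 + 1) - u (k + 2)‖ ≤ (√(2 * B / η₀) + 6 * M) * r ^ k := by
    intro k
    have hd := norm_sub_le_of_prox_step (hηpos (k + 2))
      (EReal.le_add_of_add_le_of_mem_Icc (hB _ (hFu (k + 1))) (hB _ (hFu (k + 2)))
        (hu (k + 2) (u (k + 2))))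
    have hε := norm_add_le_of_le (norm_sub_add_le_of_dual_update (hq1 (k + 1)))
      (norm_sub_add_le_of_dual_update (hq2 (k + 1)))
    have hmono : ∀ j, r ^ (k + j) ≤ r ^ k := fun j => pow_le_pow_of_le_one hr0.le hr1.le (by omega)
    rw [hrate] at hd
    nlinarith [hq1b k, hq1b (k + 1), hq2b k, hq2b (k + 1), hmono 1, hmono 2,
      Real.sqrt_nonneg (2 * B / η₀), Real.sqrt_nonneg (2 * (lam * n) / η₀)]
  obtain ⟨C, hC, hgeom⟩ :=
    exists_le_geometric_of_le_geometric_add (a := fun k => ‖u (k + 1) - u k‖) 2 hr0 hstep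
  refine ⟨⟨C, r, hC, hr0, hr1, hgeom⟩, ?_⟩
  obtain ⟨uh, huh⟩ := cauchySeq_tendsto_of_complete <|
    cauchySeq_of_le_geometric r C hr1 fun k => (dist_eq_norm' _ _).trans_le (hgeom k)
  have hq1t := tendsto_zero_of_norm_succ_le_geometric hr0.le hr1 hq1b
  have hq2t := tendsto_zero_of_norm_succ_le_geometric hr0.le hr1 hq2b
  exact ⟨uh, huh, tendsto_of_dual_update huh hq1t hq1, tendsto_of_dual_update huh hq2t hq2,
    hq1t, hq2t⟩
end
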